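/- Let G be a finite simple locally bipartite graph with δ(G) > (6/11)·|G| that contains no copy of C̄₇, and let a₀, a₁, …, a₆ be distinct vertices of G forming a copy of H₂ (i.e. the map vᵢ ↦ aᵢ is an injective graph homomorphism from H₂ into G). Then the common neighbourhood Γ(a₅) ∩ Γ(a₀) ∩ Γ(a₂) has size at least 11·δ(G) − 6·|G| > 0; in particular there is a vertex u ∉ {a₀, …, a₆} adjacent to all of a₅, a₀ and a₂, so this copy of H₂ extends to a copy of H₂⁺. -/

import Mathlib

open SimpleGraph

/-- A finite simple graph is *locally bipartite* if each neighbourhood induces a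
bipartite (equivalently, 2-colourable) graph. -/
def LocallyBipartite {V : Type*} (G : SimpleGraph V) : Prop :=
  ∀ v : V, (G.induce (G.neighborSet v)).Colorable 2

/-- `C̄₇`, the complement of the 7-cycle: `i` and `j` are adjacent iff they differ by
`±2` or `±3` modulo 7. -/
def C7bar : SimpleGraph (ZMod 7) :=
  SimpleGraph.fromRel (fun i j => j = i + 2 ∨ j = i + 3)

/-- `H₀`, the Moser spindle: the 7-cycle `v₀v₁…v₆` together with the edges
`v₀v₂`, `v₀v₅`, `v₁v₃`, `v₄v₆`. -/
def H0 : SimpleGraph (ZMod 7) :=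
  SimpleGraph.fromRel (fun i j =>
    j = i + 1 ∨ (i = 0 ∧ j = 2) ∨ (i = 0 ∧ j = 5) ∨ (i = 1 ∧ j = 3) ∨ (i = 4 ∧ j = 6))

/-- `H₁`: the 7-cycle `v₀v₁…v₆` together with the edges
`v₃v₅`, `v₅v₀`, `v₀v₂`, `v₂v₄`, `v₆v₁`. -/
def H1 : SimpleGraph (ZMod 7) :=
  SimpleGraph.fromRel (fun i j =>
    j = i + 1 ∨ (i = 3 ∧ j = 5) ∨ (i = 5 ∧ j = 0) ∨ (i = 0 ∧ j = 2) ∨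
      (i = 2 ∧ j = 4) ∨ (i = 6 ∧ j = 1))

/-- `H₂`: the 7-cycle `v₀v₁…v₆` together with the edges
`v₁v₃`, `v₃v₅`, `v₅v₀`, `v₀v₂`, `v₂v₄`, `v₄v₆`. -/
def H2 : SimpleGraph (ZMod 7) :=
  SimpleGraph.fromRel (fun i j =>
    j = i + 1 ∨ (i = 1 ∧ j = 3) ∨ (i = 3 ∧ j = 5) ∨ (i = 5 ∧ j = 0) ∨
      (i = 0 ∧ j = 2) ∨ (i = 2 ∧ j = 4) ∨ (i = 4 ∧ j = 6))

/-- `H₂⁺`: the graph `H₂` (on the `some` vertices) together with an extra vertex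
(`none`) joined to exactly `v₀`, `v₂` and `v₅`. -/
def H2plus : SimpleGraph (Option (ZMod 7)) :=
  SimpleGraph.fromRel (fun a b =>
    match a, b with
    | some i, some j =>
        j = i + 1 ∨ (i = 1 ∧ j = 3) ∨ (i = 3 ∧ j = 5) ∨ (i = 5 ∧ j = 0) ∨
          (i = 0 ∧ j = 2) ∨ (i = 2 ∧ j = 4) ∨ (i = 4 ∧ j = 6)
    | none, some j => j = 0 ∨ j = 2 ∨ j = 5
    | _, _ => False)

/-- A graph `G` contains a copy of `H` if there is an injective graph homomorphism
from `H` to `G`, i.e. `G` has a (not necessarily induced) subgraph isomorphic to `H`. -/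
def ContainsCopy {W V : Type*} (H : SimpleGraph W) (G : SimpleGraph V) : Prop :=
  ∃ f : H →g G, Function.Injective f

/-- A pair of vertices `u, v` is *dense* if the common neighbourhood of `u` and `v`
contains an edge. -/
def DensePair {V : Type*} (G : SimpleGraph V) (u v : V) : Prop :=
  ∃ x y : V, G.Adj u x ∧ G.Adj v x ∧ G.Adj u y ∧ G.Adj v y ∧ G.Adj x y

/-- A pair of distinct vertices `u, v` is *sparse* if `u` and `v` are not adjacent and
the common neighbourhood of `u` and `v` contains no edge. -/
def SparsePair {V : Type*} (G : SimpleGraph V) (u v : V) : Prop :=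
  u ≠ v ∧ ¬ G.Adj u v ∧ ¬ DensePair G u v

/-- A set of vertices is independent if it contains no edge. -/
def IsIndepSet {V : Type*} (G : SimpleGraph V) (s : Set V) : Prop :=
  ∀ ⦃u⦄, u ∈ s → ∀ ⦃v⦄, v ∈ s → ¬ G.Adj u v

/-!
Give the vertices `a₀, …, a₆` of the copy the weights `3, 1, 2, 1, 1, 2, 1` (total `11`).
No vertex `v` can be adjacent to all vertices of a triangle of the copy, nor to a set of them
that closes a `5`-cycle in some neighbourhood: either would put an odd cycle into a
neighbourhood. Nor can `v` be adjacent to `a₀, a₁, a₄, a₅` or to `a₀, a₂, a₃, a₆`: replacing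
`a₆`, resp. `a₁`, by `v` would give a copy of `H₂` plus the edge `v₁v₆`, which is isomorphic
to `C̄₇`.
A finite check shows that a vertex avoiding these patterns sends total weight at most `6` to
the copy, and at most `7` if it is adjacent to `a₀, a₂, a₅`. Double counting the weighted
degrees gives `11 δ(G) ≤ 6 |G| + |Γ(a₅) ∩ Γ(a₀) ∩ Γ(a₂)|`, and a common neighbour of `a₅, a₀, a₂`
lying on the copy would again realise one of the patterns.
-/

open Finset Function

instance : DecidableRel H2.Adj := fun i j =>
  decidable_of_iff _ (SimpleGraph.fromRel_adj _ i j).symm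

instance : DecidableRel C7bar.Adj := fun i j =>
  decidable_of_iff _ (SimpleGraph.fromRel_adj _ i j).symm

theorem Fin.two_eq_of_ne_of_ne {p q r : Fin 2} (hpq : p ≠ q) (hqr : q ≠ r) : p = r := by
  revert p q r; decide

theorem Function.Injective.update {α β : Type*} [DecidableEq α] {f : α → β}
    (hf : Injective f) (i : α) {v : β} (hv : ∀ j ≠ i, f j ≠ v) : Injective (update f i v) := by
  intro j k hjk
  by_cases hj : j = i <;> by_cases hk : k = i
  · exact hj.trans hk.symm
  · subst hj
    rw [update_self, update_of_ne hk] at hjk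
    exact absurd hjk.symm (hv k hk)
  · subst hk
    rw [update_self, update_of_ne hj] at hjk
    exact absurd hjk (hv j hj)
  · rw [update_of_ne hj, update_of_ne hk] at hjk
    exact hf hjk

namespace SimpleGraph

variable {V : Type*} {G : SimpleGraph V}

theorem Coloring.eq_of_adj_of_adj (C : G.Coloring (Fin 2)) {x y z : V}
    (hxy : G.Adj x y) (hyz : G.Adj y z) : C x = C z :=
  Fin.two_eq_of_ne_of_ne (C.valid hxy) (C.valid hyz)

theorem adj_update_of_adj {W : Type*} [DecidableEq W] {H : SimpleGraph W} {f : W → V}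
    (hf : ∀ i j, H.Adj i j → G.Adj (f i) (f j)) {i : W} {v : V}
    (hv : ∀ j, H.Adj i j → G.Adj v (f j)) (j k : W) (hjk : H.Adj j k) :
    G.Adj (update f i v j) (update f i v k) := by
  rcases eq_or_ne j i with rfl | hj
  · rw [update_self, update_of_ne hjk.ne.symm]
    exact hv k hjk
  rcases eq_or_ne k i with rfl | hk
  · rw [update_self, update_of_ne hj]
    exact (hv j hjk.symm).symm
  · rw [update_of_ne hj, update_of_ne hk]
    exact hf j k hjk

theorem sum_mul_minDegree_le_sum_sum_filter_adj [Fintype V] [DecidableRel G.Adj]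
    {ι : Type*} [Fintype ι] (f : ι → V) (w : ι → ℕ) :
    (∑ i, w i) * G.minDegree ≤ ∑ v, ∑ i ∈ univ.filter (fun i => G.Adj v (f i)), w i := by
  have hdeg : ∀ i, ∑ v, (if G.Adj v (f i) then w i else 0) = w i * G.degree (f i) := by
    intro i
    rw [← sum_filter, sum_const, smul_eq_mul, mul_comm, ← card_neighborFinset_eq_degree,
      neighborFinset_eq_filter]
    simp only [adj_comm]
  simp_rw [sum_filter]
  rw [sum_comm, sum_mul]
  exact sum_le_sum fun i _ => (hdeg i).symm ▸ Nat.mul_le_mul_left _ (G.minDegree_le_degree _)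

end SimpleGraph

namespace LocallyBipartite

variable {V : Type*} {G : SimpleGraph V}

theorem not_adj_of_path_two (hG : LocallyBipartite G) {w x y z : V} (hx : G.Adj w x)
    (hy : G.Adj w y) (hz : G.Adj w z) (hxy : G.Adj x y) (hyz : G.Adj y z) : ¬ G.Adj x z := by
  obtain ⟨C⟩ := hG w
  exact fun hxz => C.valid (v := ⟨x, hx⟩) (w := ⟨z, hz⟩) hxz
    (C.eq_of_adj_of_adj (y := ⟨y, hy⟩) hxy hyz)

theorem not_adj_of_path_four (hG : LocallyBipartite G) {w x₁ x₂ x₃ x₄ x₅ : V}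
    (h₁ : G.Adj w x₁) (h₂ : G.Adj w x₂) (h₃ : G.Adj w x₃) (h₄ : G.Adj w x₄) (h₅ : G.Adj w x₅)
    (h₁₂ : G.Adj x₁ x₂) (h₂₃ : G.Adj x₂ x₃) (h₃₄ : G.Adj x₃ x₄) (h₄₅ : G.Adj x₄ x₅) :
    ¬ G.Adj x₅ x₁ := by
  obtain ⟨C⟩ := hG w
  refine fun h₅₁ => C.valid (v := ⟨x₅, h₅⟩) (w := ⟨x₁, h₁⟩) h₅₁ ?_
  calc C ⟨x₅, h₅⟩ = C ⟨x₃, h₃⟩ :=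
        (C.eq_of_adj_of_adj (x := ⟨x₃, h₃⟩) (y := ⟨x₄, h₄⟩) (z := ⟨x₅, h₅⟩) h₃₄ h₄₅).symm
    _ = C ⟨x₁, h₁⟩ := (C.eq_of_adj_of_adj (x := ⟨x₁, h₁⟩) (y := ⟨x₂, h₂⟩) (z := ⟨x₃, h₃⟩)
      h₁₂ h₂₃).symm

end LocallyBipartite

def h2Weight : ZMod 7 → ℕ := ![3, 1, 2, 1, 1, 2, 1]

def h2BasicObstructions : Finset (Finset (ZMod 7)) :=
  {{0, 1, 2}, {1, 2, 3}, {2, 3, 4}, {3, 4, 5}, {4, 5, 6}, {5, 6, 0},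
    {0, 2, 4}, {1, 3, 5}, {2, 4, 6}, {3, 5, 0}, {0, 1, 3, 4, 6}}

def h2Obstructions : Finset (Finset (ZMod 7)) :=
  h2BasicObstructions ∪ {{0, 1, 4, 5}, {0, 2, 3, 6}}

theorem sum_h2Weight : ∑ i, h2Weight i = 11 := by decide

set_option maxRecDepth 2000 in
theorem sum_h2Weight_le (S : Finset (ZMod 7)) (hS : ∀ P ∈ h2Obstructions, ¬ P ⊆ S) :
    ∑ i ∈ S, h2Weight i ≤ 6 + if {0, 2, 5} ⊆ S then 1 else 0 := by
  revert S; decide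

section H2Copy

variable {V : Type*} {G : SimpleGraph V} {a : ZMod 7 → V}

theorem containsCopy_C7bar_of_adj_one_six (hinj : Injective a)
    (ha : ∀ i j, H2.Adj i j → G.Adj (a i) (a j)) (h16 : G.Adj (a 1) (a 6)) :
    ContainsCopy C7bar G := by
  -- `k ↦ 3k` turns the differences `±2, ±3` into `∓1, ±2`: it maps `C̄₇` onto `H₂` plus `v₁v₆`.
  have hC7 : ∀ i j : ZMod 7, C7bar.Adj i j →
      H2.Adj (3 * i) (3 * j) ∨ (3 * i = 1 ∧ 3 * j = 6) ∨ (3 * i = 6 ∧ 3 * j = 1) := by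
    decide
  refine ⟨⟨fun k => a (3 * k), fun {i j} hij => ?_⟩, hinj.comp (by decide)⟩
  rcases hC7 i j hij with h | ⟨hi, hj⟩ | ⟨hi, hj⟩
  · exact ha _ _ h
  · simpa only [hi, hj] using h16
  · simpa only [hi, hj] using h16.symm

theorem not_forall_adj_of_mem_h2BasicObstructions (hG : LocallyBipartite G)
    (ha : ∀ i j, H2.Adj i j → G.Adj (a i) (a j)) (v : V) :
    ∀ P ∈ h2BasicObstructions, ¬ ∀ i ∈ P, G.Adj v (a i) := by
  have triangle : ∀ i j k, H2.Adj i j ∧ H2.Adj j k ∧ H2.Adj i k →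
      ¬ (G.Adj v (a i) ∧ G.Adj v (a j) ∧ G.Adj v (a k)) :=
    fun i j k ⟨hij, hjk, hik⟩ ⟨hi, hj, hk⟩ =>
      hG.not_adj_of_path_two hi hj hk (ha i j hij) (ha j k hjk) (ha i k hik)
  have fan : ∀ p c q r s, H2.Adj c p ∧ H2.Adj c q ∧ H2.Adj c r ∧ H2.Adj c s ∧
      H2.Adj p q ∧ H2.Adj q r ∧ H2.Adj r s →
      ¬ (G.Adj v (a p) ∧ G.Adj v (a c) ∧ G.Adj v (a s)) :=
    fun p c q r s ⟨hcp, hcq, hcr, hcs, hpq, hqr, hrs⟩ ⟨hp, hc, hs⟩ =>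
      hG.not_adj_of_path_four (ha c p hcp) (ha c q hcq) (ha c r hcr) (ha c s hcs) hc.symm
        (ha p q hpq) (ha q r hqr) (ha r s hrs) hs.symm hp
  have pentagon : ∀ p q r s t, H2.Adj p q ∧ H2.Adj q r ∧ H2.Adj r s ∧ H2.Adj s t ∧ H2.Adj t p →
      ¬ (G.Adj v (a p) ∧ G.Adj v (a q) ∧ G.Adj v (a r) ∧ G.Adj v (a s) ∧ G.Adj v (a t)) :=
    fun p q r s t ⟨hpq, hqr, hrs, hst, htp⟩ ⟨hp, hq, hr, hs, ht⟩ =>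
      hG.not_adj_of_path_four hp hq hr hs ht (ha p q hpq) (ha q r hqr) (ha r s hrs) (ha s t hst)
        (ha t p htp)
  simp only [h2BasicObstructions, mem_insert, mem_singleton, forall_eq_or_imp, forall_eq]
  exact ⟨triangle 0 1 2 (by decide), triangle 1 2 3 (by decide), triangle 2 3 4 (by decide),
    triangle 3 4 5 (by decide), triangle 4 5 6 (by decide), triangle 5 6 0 (by decide),
    fan 0 2 1 3 4 (by decide), fan 1 3 2 4 5 (by decide), fan 2 4 3 5 6 (by decide),
    fan 3 5 4 6 0 (by decide), pentagon 0 1 3 4 6 (by decide)⟩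

theorem apply_ne_of_forall_adj (hG : LocallyBipartite G)
    (ha : ∀ i j, H2.Adj i j → G.Adj (a i) (a j)) {P : Finset (ZMod 7)} {v : V}
    (hv : ∀ i ∈ P, G.Adj v (a i)) {j : ZMod 7}
    (hj : j ∉ P → ∃ Q ∈ h2BasicObstructions, Q ⊆ H2.neighborFinset j ∪ P) : a j ≠ v := by
  rintro rfl
  by_cases hjP : j ∈ P
  · exact (hv j hjP).ne rfl
  obtain ⟨Q, hQ, hQP⟩ := hj hjP
  refine not_forall_adj_of_mem_h2BasicObstructions hG ha (a j) Q hQ fun i hi => ?_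
  rcases mem_union.1 (hQP hi) with hi | hi
  · exact ha j i ((mem_neighborFinset _ _ _).1 hi)
  · exact hv i hi

theorem not_adj_update_one_six (hG : LocallyBipartite G) (hC7 : ¬ ContainsCopy C7bar G)
    (hinj : Injective a) (ha : ∀ i j, H2.Adj i j → G.Adj (a i) (a j)) {P : Finset (ZMod 7)}
    {i : ZMod 7} (hP : ∀ j ≠ i, j ∉ P → ∃ Q ∈ h2BasicObstructions, Q ⊆ H2.neighborFinset j ∪ P)
    (hiP : ∀ j, H2.Adj i j → j ∈ P) {v : V} (hv : ∀ j ∈ P, G.Adj v (a j)) :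
    ¬ G.Adj (update a i v 1) (update a i v 6) := fun h16 =>
  hC7 <| containsCopy_C7bar_of_adj_one_six
    (hinj.update i fun j hj => apply_ne_of_forall_adj hG ha hv (hP j hj))
    (adj_update_of_adj ha fun j hj => hv j (hiP j hj)) h16

theorem not_forall_adj_of_mem_h2Obstructions (hG : LocallyBipartite G)
    (hC7 : ¬ ContainsCopy C7bar G) (hinj : Injective a)
    (ha : ∀ i j, H2.Adj i j → G.Adj (a i) (a j)) (v : V) :
    ∀ P ∈ h2Obstructions, ¬ ∀ i ∈ P, G.Adj v (a i) := by
  intro P hP hv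
  rcases mem_union.1 hP with hP | hP
  · exact not_forall_adj_of_mem_h2BasicObstructions hG ha v P hP hv
  simp only [mem_insert, mem_singleton] at hP
  rcases hP with rfl | rfl
  · refine not_adj_update_one_six hG hC7 hinj ha (i := 6) (by decide) (by decide) hv ?_
    rw [update_of_ne (by decide), update_self]
    exact (hv 1 (by decide)).symm
  · refine not_adj_update_one_six hG hC7 hinj ha (i := 1) (by decide) (by decide) hv ?_
    rw [update_self, update_of_ne (by decide)]
    exact hv 6 (by decide)

theorem eleven_mul_minDegree_le [Fintype V] [DecidableRel G.Adj] (hG : LocallyBipartite G)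
    (hC7 : ¬ ContainsCopy C7bar G) (hinj : Injective a)
    (ha : ∀ i j, H2.Adj i j → G.Adj (a i) (a j)) :
    11 * G.minDegree ≤
      6 * Fintype.card V + #{v | ∀ i ∈ ({0, 2, 5} : Finset (ZMod 7)), G.Adj v (a i)} := by
  let N : V → Finset (ZMod 7) := fun v => univ.filter fun i => G.Adj v (a i)
  calc 11 * G.minDegree = (∑ i, h2Weight i) * G.minDegree := by rw [sum_h2Weight]
    _ ≤ ∑ v, ∑ i ∈ N v, h2Weight i := G.sum_mul_minDegree_le_sum_sum_filter_adj a h2Weight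
    _ ≤ ∑ v, (6 + if {0, 2, 5} ⊆ N v then 1 else 0) := sum_le_sum fun v _ =>
      sum_h2Weight_le (N v) fun P hP hPN =>
        not_forall_adj_of_mem_h2Obstructions hG hC7 hinj ha v P hP fun i hi =>
          (mem_filter.1 (hPN hi)).2
    _ = _ := by
      rw [sum_add_distrib, sum_boole]
      simp [N, subset_iff, mul_comm]

end H2Copy

/-- In a locally bipartite graph with minimum degree greater than `6/11·|G|` and no copy
of `C̄₇`, any copy `a` of `H₂` extends: the common neighbourhood of `a₅, a₀, a₂` has size
at least `11·δ(G) − 6·|G| > 0`, and in particular there is a vertex outside the copy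
adjacent to `a₅`, `a₀` and `a₂`, giving a copy of `H₂⁺`. -/
theorem copy_of_H2_extends_to_H2plus {V : Type} [Fintype V]
    (G : SimpleGraph V) [DecidableRel G.Adj]
    (hLB : LocallyBipartite G)
    (hdeg : (6 / 11 : ℝ) * (Fintype.card V : ℝ) < (G.minDegree : ℝ))
    (hC7 : ¬ ContainsCopy C7bar G)
    (a : ZMod 7 → V) (hinj : Function.Injective a)
    (hcopy : ∀ i j : ZMod 7, H2.Adj i j → G.Adj (a i) (a j)) :
    11 * (G.minDegree : ℝ) - 6 * (Fintype.card V : ℝ) ≤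
      ((G.neighborSet (a 5) ∩ G.neighborSet (a 0) ∩ G.neighborSet (a 2)).ncard : ℝ) ∧
    0 < (G.neighborSet (a 5) ∩ G.neighborSet (a 0) ∩ G.neighborSet (a 2)).ncard ∧
    ∃ u : V, u ∉ Set.range a ∧ G.Adj u (a 5) ∧ G.Adj u (a 0) ∧ G.Adj u (a 2) := by
  set T : Finset V := {v | ∀ i ∈ ({0, 2, 5} : Finset (ZMod 7)), G.Adj v (a i)}
  have hT : G.neighborSet (a 5) ∩ G.neighborSet (a 0) ∩ G.neighborSet (a 2) = T := by
    ext v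
    simp only [T, Set.mem_inter_iff, mem_neighborSet, coe_filter, mem_univ, true_and,
      Set.mem_ofPred_eq, mem_insert, mem_singleton, forall_eq_or_imp, forall_eq, adj_comm]
    tauto
  have hcount : 11 * (G.minDegree : ℝ) ≤ 6 * Fintype.card V + #T := by
    exact_mod_cast eleven_mul_minDegree_le hLB hC7 hinj hcopy
  have hpos : 0 < #T := by exact_mod_cast (show (0 : ℝ) < #T by linarith)
  rw [hT, Set.ncard_coe_finset]
  refine ⟨by linarith, hpos, ?_⟩
  obtain ⟨u, hu⟩ := card_pos.1 hpos
  have hu' : ∀ i ∈ ({0, 2, 5} : Finset (ZMod 7)), G.Adj u (a i) := (mem_filter.1 hu).2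
  have hP : ∀ j ∉ ({0, 2, 5} : Finset (ZMod 7)),
      ∃ Q ∈ h2BasicObstructions, Q ⊆ H2.neighborFinset j ∪ {0, 2, 5} := by decide
  exact ⟨u, fun ⟨j, hj⟩ => apply_ne_of_forall_adj hLB hcopy hu' (hP j) hj,
    hu' 5 (by decide), hu' 0 (by decide), hu' 2 (by decide)⟩
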